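/- Let (K, v) be a separably closed valued field of characteristic p > 0 with value group Γ = v(K^×). Then for every a ∈ K with a ≠ 0 and every δ ∈ Γ with v(a) ≤ δ, there exists b ∈ K such that v(a − b^p) = δ. -/

import Mathlib

/-- A valuation on a field `K` with values in the linearly ordered abelian group `Γ`
(together with `∞ = ⊤`), surjective onto `Γ`, i.e. `Γ = v(K^×)`. -/
structure ValuedFieldAux (K : Type*) [Field K] (Γ : Type*)
    [AddCommGroup Γ] [LinearOrder Γ] [IsOrderedAddMonoid Γ] where
  v : K → WithTop Γ
  v_eq_top_iff : ∀ x : K, v x = ⊤ ↔ x = 0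
  v_mul : ∀ x y : K, v (x * y) = v x + v y
  v_add : ∀ x y : K, min (v x) (v y) ≤ v (x + y)
  v_surj : ∀ γ : Γ, ∃ x : K, v x = (γ : WithTop Γ)

/-!
If `v a = δ` take `b = 0`. Otherwise pick `c` with `v c = δ` and `m` of large valuation, and let `b`
be a root of the separable polynomial `X ^ p + c m X - (a - c)`. Then `a - b ^ p = c (1 + m b)`, and
comparing valuations in `b ^ p = (a - c) - c m b` forces `v (m b) > 0`, whence `v (a - b ^ p) = δ`.
-/

section OrderedGroup

variable {Γ : Type*} [AddCommGroup Γ] [LinearOrder Γ] [IsOrderedAddMonoid Γ]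

lemma exists_nonneg_add_pos {ε : Γ} (hε : 0 < ε) (α : Γ) : ∃ μ : Γ, 0 ≤ μ ∧ 0 < μ + α :=
  ⟨|α| + ε, add_nonneg (abs_nonneg α) hε.le, by
    rw [add_right_comm, add_comm |α|]; exact add_pos_of_nonneg_of_pos (add_abs_nonneg α) hε⟩

lemma add_pos_of_min_le_nsmul {n : ℕ} (hn : n ≠ 0) {α δ μ β : Γ} (hαδ : α ≤ δ) (hμ : 0 ≤ μ)
    (hα : 0 < μ + α) (h : min α (δ + μ + β) ≤ n • β) : 0 < μ + β := by
  by_contra! hμβ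
  have hβ : β ≤ 0 := (le_add_of_nonneg_left hμ).trans hμβ
  have hnβ : n • β ≤ β :=
    (nsmul_le_nsmul_left_of_nonpos hβ (Nat.one_le_iff_ne_zero.2 hn)).trans_eq (one_nsmul β)
  rcases min_le_iff.1 (h.trans hnβ) with h | h
  · exact hα.not_ge ((add_le_add_right h μ).trans hμβ)
  · have hδ : 0 < δ + μ := hα.trans_le (by rw [add_comm δ]; exact add_le_add_right hαδ μ)
    exact hδ.not_ge (add_le_iff_nonpos_left.1 h)

end OrderedGroup

namespace ValuedFieldAux

variable {K : Type*} [Field K] {Γ : Type*} [AddCommGroup Γ] [LinearOrder Γ] [IsOrderedAddMonoid Γ]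
  (vf : ValuedFieldAux K Γ)

lemma v_zero : vf.v 0 = ⊤ := (vf.v_eq_top_iff 0).2 rfl

lemma exists_v_eq_coe {x : K} (hx : x ≠ 0) : ∃ γ : Γ, vf.v x = γ :=
  (WithTop.ne_top_iff_exists.1 (mt (vf.v_eq_top_iff x).1 hx)).imp fun _ h => h.symm

lemma ne_zero_of_v_eq_coe {x : K} {γ : Γ} (h : vf.v x = γ) : x ≠ 0 := by
  rintro rfl
  exact WithTop.top_ne_coe (vf.v_zero.symm.trans h)

lemma v_one : vf.v 1 = 0 := by
  obtain ⟨γ, hγ⟩ := vf.exists_v_eq_coe one_ne_zero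
  have h : ((γ + γ : Γ) : WithTop Γ) = γ := by rw [WithTop.coe_add, ← hγ, ← vf.v_mul, one_mul]
  rw [hγ, add_eq_left.1 (WithTop.coe_inj.1 h), WithTop.coe_zero]

def toAddValuation : AddValuation K (WithTop Γ) :=
  AddValuation.of vf.v vf.v_zero vf.v_one vf.v_add vf.v_mul

@[simp]
lemma toAddValuation_apply (x : K) : vf.toAddValuation x = vf.v x := rfl

lemma v_one_add_of_pos {x : K} (hx : 0 < vf.v x) : vf.v (1 + x) = 0 := by
  simpa [v_one] using vf.toAddValuation.map_add_eq_of_lt_left (x := 1) (y := x) (by simpa [v_one])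

lemma zero_lt_v_mul_of_pow_add_mul_mul_eq {n : ℕ} (hn : n ≠ 0) {x c m b : K} {α δ μ : Γ}
    (hb : b ^ n + c * m * b = x) (hx : vf.v x = α) (hc : vf.v c = δ) (hm : vf.v m = μ)
    (hαδ : α ≤ δ) (hμ : 0 ≤ μ) (hα : 0 < μ + α) : 0 < vf.v (m * b) := by
  rcases eq_or_ne b 0 with rfl | hb0
  · simp [vf.v_zero]
  obtain ⟨β, hβ⟩ := vf.exists_v_eq_coe hb0
  have hmin : min α (δ + μ + β) ≤ n • β := by
    have h := vf.toAddValuation.map_sub x (c * m * b)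
    rw [← eq_sub_of_add_eq hb] at h
    simp only [toAddValuation_apply, vf.toAddValuation.map_pow, vf.v_mul, hx, hc, hm, hβ] at h
    exact_mod_cast h
  rw [vf.v_mul, hm, hβ, ← WithTop.coe_add, ← WithTop.coe_zero, WithTop.coe_lt_coe]
  exact add_pos_of_min_le_nsmul hn hαδ hμ hα hmin

end ValuedFieldAux

/-- Let `(K, v)` be a separably closed valued field of characteristic
`p > 0` with value group `Γ`. Then for every `a ≠ 0` and every `δ ∈ Γ` with
`v a ≤ δ`, there exists `b ∈ K` with `v (a − b^p) = δ`. -/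
theorem stmt_7 (p : ℕ) (hp : p.Prime) (K : Type*) [Field K] [CharP K p] [IsSepClosed K]
    (Γ : Type*) [AddCommGroup Γ] [LinearOrder Γ] [IsOrderedAddMonoid Γ] (vf : ValuedFieldAux K Γ)
    (a : K) (ha : a ≠ 0) (δ : Γ) (hδ : vf.v a ≤ (δ : WithTop Γ)) :
    ∃ b : K, vf.v (a - b ^ p) = (δ : WithTop Γ) := by
  rcases hδ.eq_or_lt with heq | hlt
  · exact ⟨0, by rw [zero_pow hp.ne_zero, sub_zero, heq]⟩
  obtain ⟨α, hα⟩ := vf.exists_v_eq_coe ha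
  rw [hα, WithTop.coe_lt_coe] at hlt
  obtain ⟨μ, hμ, hμα⟩ := exists_nonneg_add_pos (sub_pos.2 hlt) α
  obtain ⟨c, hc⟩ := vf.v_surj δ
  obtain ⟨m, hm⟩ := vf.v_surj μ
  obtain ⟨b, hb⟩ := IsSepClosed.exists_root_C_mul_X_pow_add_C_mul_X_add_C' p p 1 (c * m)
    (-(a - c)) dvd_rfl hp.two_le (mul_ne_zero (vf.ne_zero_of_v_eq_coe hc) (vf.ne_zero_of_v_eq_coe hm))
  have hac : vf.v (a - c) = α := by
    rw [← hα]
    exact vf.toAddValuation.map_sub_eq_of_lt_left (by simpa [hα, hc])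
  have hmb : 0 < vf.v (m * b) := vf.zero_lt_v_mul_of_pow_add_mul_mul_eq hp.ne_zero
    (by linear_combination hb) hac hc hm hlt.le hμ hμα
  refine ⟨b, ?_⟩
  rw [show a - b ^ p = c * (1 + m * b) by linear_combination -hb, vf.v_mul, hc,
    vf.v_one_add_of_pos hmb, add_zero]
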